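/- Let s > -3/4, k ≥ 0 with s - k > 1. Then with the test functions h₁(τ₁,ξ₁) = 𝟙_{[0,1]}(ξ₁)𝟙_{[0,1]}(τ₁), h₂(τ₂,ξ₂) = 𝟙_{[N,N+1]}(ξ₂)𝟙_{[N²,N²+1]}(τ₂), h(τ,ξ) = 𝟙_{[N,N+1]}(ξ)𝟙_{[N²,N²+1]}(τ), each of L² norm 1, the trilinear form ∫ ξ⟨ξ⟩^s⟨τ+ξ³⟩^{b'} h h₁ h₂ / (⟨ξ₁⟩^k⟨τ₁-ξ₁²⟩^b⟨ξ₂⟩^k⟨τ₂-ξ₂²⟩^b) dτ dξ dτ₁ dξ₁ (over ξ=ξ₁+ξ₂, τ=τ₁+τ₂) is bounded below by c·N^{1+s-k+3b'-b}, which is unbounded as N → ∞ when 1 + s - k + 3b' - b > 0. -/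

import Mathlib

open MeasureTheory

set_option maxHeartbeats 1000000

/-- Japanese bracket `⟨x⟩ = (1 + x²)^{1/2}`. -/
noncomputable def jap (x : ℝ) : ℝ := Real.sqrt (1 + x ^ 2)

/-- Indicator (as a real-valued function) of the interval `[a, b]`. -/
noncomputable def ind (a b x : ℝ) : ℝ := Set.indicator (Set.Icc a b) 1 x

namespace BilinearCounterexample

lemma jap_pos (x : ℝ) : 0 < jap x := Real.sqrt_pos.mpr (by positivity)

lemma one_le_jap (x : ℝ) : 1 ≤ jap x := by
  have h : Real.sqrt 1 ≤ Real.sqrt (1 + x ^ 2) := Real.sqrt_le_sqrt (by nlinarith [sq_nonneg x])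
  simpa [Real.sqrt_one, jap] using h

lemma abs_le_jap (x : ℝ) : |x| ≤ jap x := by
  have h : Real.sqrt (x ^ 2) ≤ Real.sqrt (1 + x ^ 2) := Real.sqrt_le_sqrt (by linarith)
  simpa [Real.sqrt_sq_eq_abs, jap] using h

lemma jap_le (x : ℝ) : jap x ≤ 1 + |x| := by
  have h : Real.sqrt (1 + x ^ 2) ≤ Real.sqrt ((1 + |x|) ^ 2) := by
    apply Real.sqrt_le_sqrt; nlinarith [abs_nonneg x, sq_abs x]
  simpa [jap, Real.sqrt_sq (by positivity : (0:ℝ) ≤ 1 + |x|)] using h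

lemma continuous_jap : Continuous jap :=
  Real.continuous_sqrt.comp (by continuity)

lemma ind_nonneg (a b x : ℝ) : 0 ≤ ind a b x :=
  Set.indicator_nonneg (fun _ _ => zero_le_one) x

lemma ind_le_one (a b x : ℝ) : ind a b x ≤ 1 := by
  unfold ind; by_cases h : x ∈ Set.Icc a b <;> simp [h]

lemma ind_of_mem {a b x : ℝ} (h : x ∈ Set.Icc a b) : ind a b x = 1 := by simp [ind, h]

lemma ind_eq_zero {a b x : ℝ} (h : x ∉ Set.Icc a b) : ind a b x = 0 := by simp [ind, h]

lemma measurable_ind (a b : ℝ) : Measurable (ind a b) :=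
  measurable_one.indicator measurableSet_Icc

/- rpow sandwich lemmas -/

lemma rpow_upper {a M t : ℝ} (ha : 1 ≤ a) (hM : a ≤ M) : a ^ t ≤ M ^ |t| := by
  have hM1 : 1 ≤ M := ha.trans hM
  rcases le_or_gt 0 t with ht | ht
  · rw [abs_of_nonneg ht]; exact Real.rpow_le_rpow (by linarith) hM ht
  · have h1 : a ^ t ≤ 1 := Real.rpow_le_one_of_one_le_of_nonpos ha ht.le
    have h2 : (1:ℝ) ≤ M ^ |t| := Real.one_le_rpow hM1 (abs_nonneg t)
    linarith

lemma rpow_lower {a M t : ℝ} (ha : 1 ≤ a) (hM : a ≤ M) : M ^ (-|t|) ≤ a ^ t := by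
  have hM1 : 1 ≤ M := ha.trans hM
  rcases le_or_gt 0 t with ht | ht
  · have h1 : M ^ (-|t|) ≤ 1 :=
      Real.rpow_le_one_of_one_le_of_nonpos hM1 (neg_nonpos.mpr (abs_nonneg t))
    have h2 : (1:ℝ) ≤ a ^ t := Real.one_le_rpow ha ht
    linarith
  · rw [abs_of_neg ht, neg_neg]
    exact Real.rpow_le_rpow_of_nonpos (by linarith) hM ht.le

lemma min_rpow_le {L U a t : ℝ} (hL : 0 < L) (h1 : L ≤ a) (h2 : a ≤ U) :
    min (L ^ t) (U ^ t) ≤ a ^ t := by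
  rcases le_or_gt 0 t with ht | ht
  · exact (min_le_left _ _).trans (Real.rpow_le_rpow hL.le h1 ht)
  · exact (min_le_right _ _).trans (Real.rpow_le_rpow_of_nonpos (hL.trans_le h1) h2 ht.le)

lemma rpow_le_max {L U a t : ℝ} (hL : 0 < L) (h1 : L ≤ a) (h2 : a ≤ U) :
    a ^ t ≤ max (L ^ t) (U ^ t) := by
  rcases le_or_gt 0 t with ht | ht
  · exact (Real.rpow_le_rpow (hL.le.trans h1) h2 ht).trans (le_max_right _ _)
  · exact (Real.rpow_le_rpow_of_nonpos hL h1 ht.le).trans (le_max_left _ _)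

lemma min_scale_rpow {N a c t : ℝ} (hN : 0 < N) (hc : 0 < c) (h1 : N ≤ a) (h2 : a ≤ c * N) :
    min 1 (c ^ t) * N ^ t ≤ a ^ t := by
  have hNt : 0 ≤ N ^ t := (Real.rpow_pos_of_pos hN t).le
  have key : min 1 (c ^ t) * N ^ t ≤ min (N ^ t) ((c * N) ^ t) := by
    refine le_min ?_ ?_
    · simpa using mul_le_mul_of_nonneg_right (min_le_left 1 (c ^ t)) hNt
    · rw [Real.mul_rpow hc.le hN.le]
      exact mul_le_mul_of_nonneg_right (min_le_right _ _) hNt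
  exact key.trans (min_rpow_le hN h1 h2)

lemma rpow_le_scale_max {N a c d t : ℝ} (hN : 0 < N) (hc : 0 < c) (hd : 0 < d)
    (h1 : c * N ≤ a) (h2 : a ≤ d * N) :
    a ^ t ≤ max (c ^ t) (d ^ t) * N ^ t := by
  have hNt : 0 ≤ N ^ t := (Real.rpow_pos_of_pos hN t).le
  have key : a ^ t ≤ max ((c * N) ^ t) ((d * N) ^ t) :=
    rpow_le_max (by positivity) h1 h2
  refine key.trans (max_le ?_ ?_)
  · rw [Real.mul_rpow hc.le hN.le]
    exact mul_le_mul_of_nonneg_right (le_max_left _ _) hNt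
  · rw [Real.mul_rpow hd.le hN.le]
    exact mul_le_mul_of_nonneg_right (le_max_right _ _) hNt

lemma mul3_le_mul3 {a1 a2 a3 b1 b2 b3 : ℝ} (h1 : a1 ≤ b1) (h2 : a2 ≤ b2) (h3 : a3 ≤ b3)
    (p1 : 0 ≤ a1) (p2 : 0 ≤ a2) (p3 : 0 ≤ a3) (q2 : 0 ≤ b2) (_q3 : 0 ≤ b3) :
    a1 * a2 * a3 ≤ b1 * b2 * b3 :=
  mul_le_mul (mul_le_mul h1 h2 p2 (p1.trans h1)) h3 p3 (mul_nonneg (p1.trans h1) q2)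

lemma mul4_le_mul4 {a1 a2 a3 a4 b1 b2 b3 b4 : ℝ}
    (h1 : a1 ≤ b1) (h2 : a2 ≤ b2) (h3 : a3 ≤ b3) (h4 : a4 ≤ b4)
    (p1 : 0 ≤ a1) (p2 : 0 ≤ a2) (p3 : 0 ≤ a3) (p4 : 0 ≤ a4)
    (q2 : 0 ≤ b2) (q3 : 0 ≤ b3) (_q4 : 0 ≤ b4) :
    a1 * a2 * a3 * a4 ≤ b1 * b2 * b3 * b4 := by
  have hb1 : 0 ≤ b1 := p1.trans h1
  exact mul_le_mul (mul_le_mul (mul_le_mul h1 h2 p2 hb1) h3 p3 (mul_nonneg hb1 q2)) h4 p4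
    (mul_nonneg (mul_nonneg hb1 q2) q3)

/-- The trilinear integrand. -/
noncomputable def F (s k b b' N : ℝ) (q : ℝ × ℝ × ℝ × ℝ) : ℝ :=
  (q.2.1 * jap q.2.1 ^ s * jap (q.1 + q.2.1 ^ 3) ^ b' *
    (ind N (N + 1) q.2.1 * ind (N ^ 2) (N ^ 2 + 1) q.1) *
    (ind 0 1 q.2.2.2 * ind 0 1 q.2.2.1) *
    (ind N (N + 1) (q.2.1 - q.2.2.2) *
      ind (N ^ 2) (N ^ 2 + 1) (q.1 - q.2.2.1))) /
  (jap q.2.2.2 ^ k * jap (q.2.2.1 - q.2.2.2 ^ 2) ^ b *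
    jap (q.2.1 - q.2.2.2) ^ k *
    jap ((q.1 - q.2.2.1) - (q.2.1 - q.2.2.2) ^ 2) ^ b)

/-- The big box containing the support of `F`. -/
def Bx (N : ℝ) : Set (ℝ × ℝ × ℝ × ℝ) :=
  Set.Icc (N ^ 2) (N ^ 2 + 1) ×ˢ Set.Icc N (N + 1) ×ˢ Set.Icc 0 1 ×ˢ Set.Icc 0 1

/-- The small box on which `F` is bounded below. -/
def Rx (N : ℝ) : Set (ℝ × ℝ × ℝ × ℝ) :=
  Set.Icc (N ^ 2 + 1/4) (N ^ 2 + 1/2) ×ˢ Set.Icc (N + 3/4) (N + 1) ×ˢ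
    Set.Icc 0 (1/4) ×ˢ Set.Icc 0 (1/4)

lemma measurable_F (s k b b' N : ℝ) : Measurable (F s k b b' N) := by
  have c1 : Continuous fun q : ℝ × ℝ × ℝ × ℝ => q.1 := continuous_fst
  have c2 : Continuous fun q : ℝ × ℝ × ℝ × ℝ => q.2.1 := continuous_fst.comp continuous_snd
  have c3 : Continuous fun q : ℝ × ℝ × ℝ × ℝ => q.2.2.1 :=
    continuous_fst.comp (continuous_snd.comp continuous_snd)
  have c4 : Continuous fun q : ℝ × ℝ × ℝ × ℝ => q.2.2.2 :=
    continuous_snd.comp (continuous_snd.comp continuous_snd)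
  have japc : ∀ (g : ℝ × ℝ × ℝ × ℝ → ℝ), Continuous g → ∀ t : ℝ,
      Measurable fun q => jap (g q) ^ t := fun g hg t =>
    ((continuous_jap.comp hg).rpow_const fun q => Or.inl (jap_pos _).ne').measurable
  have indm : ∀ (a b : ℝ) (g : ℝ × ℝ × ℝ × ℝ → ℝ), Measurable g →
      Measurable fun q => ind a b (g q) := fun a b g hg => (measurable_ind a b).comp hg
  exact Measurable.div
    (((((c2.measurable.mul (japc _ c2 s)).mul (japc _ (c1.add (c2.pow 3)) b')).mul
        ((indm _ _ _ c2.measurable).mul (indm _ _ _ c1.measurable))).mul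
        ((indm _ _ _ c4.measurable).mul (indm _ _ _ c3.measurable))).mul
        ((indm _ _ _ (c2.sub c4).measurable).mul (indm _ _ _ (c1.sub c3).measurable)))
    ((((japc _ c4 k).mul (japc _ (c3.sub (c4.pow 2)) b)).mul (japc _ (c2.sub c4) k)).mul
        (japc _ ((c1.sub c3).sub ((c2.sub c4).pow 2)) b))

lemma den_pos (k b : ℝ) (q : ℝ × ℝ × ℝ × ℝ) :
    0 < jap q.2.2.2 ^ k * jap (q.2.2.1 - q.2.2.2 ^ 2) ^ b *
      jap (q.2.1 - q.2.2.2) ^ k *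
      jap ((q.1 - q.2.2.1) - (q.2.1 - q.2.2.2) ^ 2) ^ b :=
  mul_pos (mul_pos (mul_pos (Real.rpow_pos_of_pos (jap_pos _) _)
    (Real.rpow_pos_of_pos (jap_pos _) _)) (Real.rpow_pos_of_pos (jap_pos _) _))
    (Real.rpow_pos_of_pos (jap_pos _) _)

lemma F_nonneg (s k b b' : ℝ) {N : ℝ} (hN : 0 ≤ N) (q : ℝ × ℝ × ℝ × ℝ) :
    0 ≤ F s k b b' N q := by
  rcases le_or_gt N q.2.1 with hξ | hξ
  · refine div_nonneg ?_ (den_pos k b q).le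
    have h0 : 0 ≤ q.2.1 := hN.trans hξ
    exact mul_nonneg (mul_nonneg (mul_nonneg (mul_nonneg (mul_nonneg h0
      (Real.rpow_nonneg (jap_pos _).le _)) (Real.rpow_nonneg (jap_pos _).le _))
      (mul_nonneg (ind_nonneg _ _ _) (ind_nonneg _ _ _)))
      (mul_nonneg (ind_nonneg _ _ _) (ind_nonneg _ _ _)))
      (mul_nonneg (ind_nonneg _ _ _) (ind_nonneg _ _ _))
  · have h : ind N (N + 1) q.2.1 = 0 :=
      ind_eq_zero (fun hm => absurd hm.1 (not_le.mpr hξ))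
    simp [F, h]

lemma F_eq_zero {s k b b' N : ℝ} {q : ℝ × ℝ × ℝ × ℝ} (hq : q ∉ Bx N) :
    F s k b b' N q = 0 := by
  by_cases h1 : q.1 ∈ Set.Icc (N ^ 2) (N ^ 2 + 1)
  · by_cases h2 : q.2.1 ∈ Set.Icc N (N + 1)
    · by_cases h3 : q.2.2.1 ∈ Set.Icc (0:ℝ) 1
      · by_cases h4 : q.2.2.2 ∈ Set.Icc (0:ℝ) 1
        · exact absurd ⟨h1, h2, h3, h4⟩ hq
        · simp [F, ind_eq_zero h4]
      · simp [F, ind_eq_zero h3]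
    · simp [F, ind_eq_zero h2]
  · simp [F, ind_eq_zero h1]

lemma F_le {s k b b' : ℝ} (hk : 0 ≤ k) {N : ℝ} (hN : 1 ≤ N) {q : ℝ × ℝ × ℝ × ℝ}
    (hq : q ∈ Bx N) :
    F s k b b' N q ≤ (12 * N ^ 3) ^ (1 + |s| + |b'| + 2 * |b|) := by
  obtain ⟨τ, ξ, τ₁, ξ₁⟩ := q
  simp only [Bx, Set.mem_prod, Set.mem_Icc] at hq
  obtain ⟨⟨hτ1, hτ2⟩, ⟨hξ1, hξ2⟩, ⟨hτ₁1, hτ₁2⟩, ⟨hξ₁1, hξ₁2⟩⟩ := hq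
  have hN0 : (0:ℝ) < N := lt_of_lt_of_le one_pos hN
  have hN2 : (1:ℝ) ≤ N ^ 2 := by nlinarith
  have hN23 : N ^ 2 ≤ N ^ 3 := by nlinarith [sq_nonneg N]
  have hN3 : (1:ℝ) ≤ N ^ 3 := hN2.trans hN23
  have hNN3 : N ≤ N ^ 3 := by nlinarith [sq_nonneg (N - 1)]
  set M : ℝ := 12 * N ^ 3 with hM
  have hMpos : (0:ℝ) < M := by positivity
  have hM1 : (1:ℝ) ≤ M := by nlinarith
  -- numerator upper bound
  have hξ0 : (0:ℝ) ≤ ξ := by nlinarith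
  have hξM : ξ ≤ M := by nlinarith
  have hjξ1 : (1:ℝ) ≤ jap ξ := one_le_jap ξ
  have hjξ2 : jap ξ ≤ M := (jap_le ξ).trans (by rw [abs_of_nonneg hξ0]; nlinarith)
  have hcube : ξ ^ 3 ≤ (2 * N) ^ 3 := pow_le_pow_left₀ hξ0 (by nlinarith) 3
  have hτξ0 : (0:ℝ) ≤ τ + ξ ^ 3 := by nlinarith [pow_nonneg hξ0 3, sq_nonneg N]
  have hj31 : (1:ℝ) ≤ jap (τ + ξ ^ 3) := one_le_jap _
  have hj32 : jap (τ + ξ ^ 3) ≤ M := by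
    refine (jap_le _).trans ?_
    rw [abs_of_nonneg hτξ0]
    nlinarith
  have hQ : ξ * jap ξ ^ s * jap (τ + ξ ^ 3) ^ b' ≤ M * M ^ |s| * M ^ |b'| :=
    mul3_le_mul3 hξM (rpow_upper hjξ1 hjξ2) (rpow_upper hj31 hj32)
      hξ0 (Real.rpow_nonneg (jap_pos _).le _) (Real.rpow_nonneg (jap_pos _).le _)
      (Real.rpow_nonneg hMpos.le _) (Real.rpow_nonneg hMpos.le _)
  have hQ0 : (0:ℝ) ≤ M * M ^ |s| * M ^ |b'| :=
    mul_nonneg (mul_nonneg hMpos.le (Real.rpow_nonneg hMpos.le _))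
      (Real.rpow_nonneg hMpos.le _)
  have hnum : (ξ * jap ξ ^ s * jap (τ + ξ ^ 3) ^ b' *
      (ind N (N + 1) ξ * ind (N ^ 2) (N ^ 2 + 1) τ) *
      (ind 0 1 ξ₁ * ind 0 1 τ₁) *
      (ind N (N + 1) (ξ - ξ₁) * ind (N ^ 2) (N ^ 2 + 1) (τ - τ₁))) ≤
      M * M ^ |s| * M ^ |b'| * 1 * 1 * 1 := by
    refine mul4_le_mul4 hQ ?_ ?_ ?_ ?_ ?_ ?_ ?_ zero_le_one zero_le_one zero_le_one
    · exact mul_le_one₀ (ind_le_one _ _ _) (ind_nonneg _ _ _) (ind_le_one _ _ _)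
    · exact mul_le_one₀ (ind_le_one _ _ _) (ind_nonneg _ _ _) (ind_le_one _ _ _)
    · exact mul_le_one₀ (ind_le_one _ _ _) (ind_nonneg _ _ _) (ind_le_one _ _ _)
    · exact mul_nonneg (mul_nonneg hξ0 (Real.rpow_nonneg (jap_pos _).le _))
        (Real.rpow_nonneg (jap_pos _).le _)
    · exact mul_nonneg (ind_nonneg _ _ _) (ind_nonneg _ _ _)
    · exact mul_nonneg (ind_nonneg _ _ _) (ind_nonneg _ _ _)
    · exact mul_nonneg (ind_nonneg _ _ _) (ind_nonneg _ _ _)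
  -- denominator lower bound
  have hd1 : (1:ℝ) ≤ jap ξ₁ ^ k := Real.one_le_rpow (one_le_jap _) hk
  have hd2 : M ^ (-|b|) ≤ jap (τ₁ - ξ₁ ^ 2) ^ b := by
    refine rpow_lower (one_le_jap _) ((jap_le _).trans ?_)
    have : |τ₁ - ξ₁ ^ 2| ≤ 1 := abs_le.mpr ⟨by nlinarith, by nlinarith⟩
    nlinarith
  have hd3 : (1:ℝ) ≤ jap (ξ - ξ₁) ^ k := Real.one_le_rpow (one_le_jap _) hk
  have hd4 : M ^ (-|b|) ≤ jap ((τ - τ₁) - (ξ - ξ₁) ^ 2) ^ b := by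
    refine rpow_lower (one_le_jap _) ((jap_le _).trans ?_)
    have h1 : (ξ - ξ₁) ^ 2 ≤ (N + 1) ^ 2 := by nlinarith
    have h2 : (0:ℝ) ≤ (ξ - ξ₁) ^ 2 := sq_nonneg _
    have : |(τ - τ₁) - (ξ - ξ₁) ^ 2| ≤ 2 * N ^ 2 + 2 * N + 2 :=
      abs_le.mpr ⟨by nlinarith, by nlinarith⟩
    nlinarith
  have hMb : (0:ℝ) < M ^ (-|b|) := Real.rpow_pos_of_pos hMpos _
  have hden : M ^ (-(2 * |b|)) ≤ jap ξ₁ ^ k * jap (τ₁ - ξ₁ ^ 2) ^ b *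
      jap (ξ - ξ₁) ^ k * jap ((τ - τ₁) - (ξ - ξ₁) ^ 2) ^ b := by
    have e : M ^ (-(2 * |b|)) = 1 * M ^ (-|b|) * 1 * M ^ (-|b|) := by
      rw [show -(2 * |b|) = -|b| + -|b| by ring, Real.rpow_add hMpos]; ring
    rw [e]
    exact mul4_le_mul4 hd1 hd2 hd3 hd4 zero_le_one hMb.le zero_le_one hMb.le
      (Real.rpow_nonneg (jap_pos _).le _) (Real.rpow_nonneg (jap_pos _).le _)
      (Real.rpow_nonneg (jap_pos _).le _)
  have heq : M * M ^ |s| * M ^ |b'| / M ^ (-(2 * |b|)) = M ^ (1 + |s| + |b'| + 2 * |b|) := by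
    rw [show 1 + |s| + |b'| + 2 * |b| = 1 + |s| + |b'| - -(2 * |b|) by ring,
      Real.rpow_sub hMpos, Real.rpow_add hMpos, Real.rpow_add hMpos, Real.rpow_one]
  rw [← heq]
  simp only [F]
  refine div_le_div₀ hQ0 ?_ (Real.rpow_pos_of_pos hMpos _) hden
  simpa using hnum

lemma isCompact_Bx (N : ℝ) : IsCompact (Bx N) :=
  isCompact_Icc.prod (isCompact_Icc.prod (isCompact_Icc.prod isCompact_Icc))

lemma measurableSet_Bx (N : ℝ) : MeasurableSet (Bx N) :=
  measurableSet_Icc.prod (measurableSet_Icc.prod (measurableSet_Icc.prod measurableSet_Icc))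

lemma integrable_F (s k b b' : ℝ) (hk : 0 ≤ k) {N : ℝ} (hN : 1 ≤ N) :
    Integrable (F s k b b' N) := by
  have hN0 : (0:ℝ) < N := lt_of_lt_of_le one_pos hN
  set C : ℝ := (12 * N ^ 3) ^ (1 + |s| + |b'| + 2 * |b|) with hC
  have hCpos : 0 < C := Real.rpow_pos_of_pos (by positivity) _
  refine Integrable.mono' (g := (Bx N).indicator fun _ => C)
    ?_ (measurable_F s k b b' N).aestronglyMeasurable ?_
  · rw [integrable_indicator_iff (measurableSet_Bx N)]
    exact integrableOn_const (isCompact_Bx N).measure_lt_top.ne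
  · refine Filter.Eventually.of_forall fun q => ?_
    by_cases hq : q ∈ Bx N
    · rw [Set.indicator_of_mem hq, Real.norm_eq_abs,
        abs_of_nonneg (F_nonneg s k b b' hN0.le q)]
      exact F_le hk hN hq
    · rw [Set.indicator_of_notMem hq, F_eq_zero hq]
      simp

/-- The constant in the lower bound. -/
noncomputable def Cst (s k b b' : ℝ) : ℝ :=
  (min 1 ((3:ℝ) ^ s) * min 1 ((11:ℝ) ^ b')) /
    ((2:ℝ) ^ k * max 1 ((2:ℝ) ^ b) * (3:ℝ) ^ k * max ((1/2:ℝ) ^ b) ((4:ℝ) ^ b))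

lemma Cst_pos (s k b b' : ℝ) : 0 < Cst s k b b' := by
  have h1 : (0:ℝ) < min 1 ((3:ℝ) ^ s) :=
    lt_min one_pos (Real.rpow_pos_of_pos (by norm_num) s)
  have h2 : (0:ℝ) < min 1 ((11:ℝ) ^ b') :=
    lt_min one_pos (Real.rpow_pos_of_pos (by norm_num) b')
  have h3 : (0:ℝ) < (2:ℝ) ^ k := Real.rpow_pos_of_pos (by norm_num) k
  have h4 : (0:ℝ) < max 1 ((2:ℝ) ^ b) := lt_of_lt_of_le one_pos (le_max_left _ _)
  have h5 : (0:ℝ) < (3:ℝ) ^ k := Real.rpow_pos_of_pos (by norm_num) k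
  have h6 : (0:ℝ) < max ((1/2:ℝ) ^ b) ((4:ℝ) ^ b) :=
    lt_of_lt_of_le (Real.rpow_pos_of_pos (by norm_num) b) (le_max_left _ _)
  exact div_pos (mul_pos h1 h2) (mul_pos (mul_pos (mul_pos h3 h4) h5) h6)

lemma F_lower {s k b b' : ℝ} (hk : 0 ≤ k) {N : ℝ} (hN : 1 ≤ N) {q : ℝ × ℝ × ℝ × ℝ}
    (hq : q ∈ Rx N) :
    Cst s k b b' * N ^ (1 + s - k + 3 * b' - b) ≤ F s k b b' N q := by
  obtain ⟨τ, ξ, τ₁, ξ₁⟩ := q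
  simp only [Rx, Set.mem_prod, Set.mem_Icc] at hq
  obtain ⟨⟨hτ1, hτ2⟩, ⟨hξ1, hξ2⟩, ⟨hτ₁1, hτ₁2⟩, ⟨hξ₁1, hξ₁2⟩⟩ := hq
  have hN0 : (0:ℝ) < N := lt_of_lt_of_le one_pos hN
  -- indicators are all 1
  have i1 : ind N (N + 1) ξ = 1 := ind_of_mem ⟨by linarith, hξ2⟩
  have i2 : ind (N ^ 2) (N ^ 2 + 1) τ = 1 := ind_of_mem ⟨by linarith, by linarith⟩
  have i3 : ind 0 1 ξ₁ = 1 := ind_of_mem ⟨hξ₁1, by linarith⟩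
  have i4 : ind 0 1 τ₁ = 1 := ind_of_mem ⟨hτ₁1, by linarith⟩
  have i5 : ind N (N + 1) (ξ - ξ₁) = 1 := ind_of_mem ⟨by linarith, by linarith⟩
  have i6 : ind (N ^ 2) (N ^ 2 + 1) (τ - τ₁) = 1 := ind_of_mem ⟨by linarith, by linarith⟩
  simp only [F, i1, i2, i3, i4, i5, i6, mul_one]
  -- numerator lower bound
  have hjs : min 1 ((3:ℝ) ^ s) * N ^ s ≤ jap ξ ^ s := by
    refine min_scale_rpow hN0 (by norm_num) ?_ ?_
    · exact le_trans (by linarith) ((le_abs_self ξ).trans (abs_le_jap ξ))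
    · refine (jap_le ξ).trans ?_
      rw [abs_of_nonneg (by linarith)]; linarith
  have hA0 : (0:ℝ) < N ^ (3:ℕ) := by positivity
  have eA : ((N:ℝ) ^ (3:ℕ)) ^ b' = N ^ (3 * b') := by
    rw [← Real.rpow_natCast N 3, ← Real.rpow_mul hN0.le]; norm_num
  have hjb' : min 1 ((11:ℝ) ^ b') * N ^ (3 * b') ≤ jap (τ + ξ ^ 3) ^ b' := by
    have hcube : N ^ 3 ≤ ξ ^ 3 := pow_le_pow_left₀ hN0.le (by linarith) 3
    have hcube2 : ξ ^ 3 ≤ (2 * N) ^ 3 := pow_le_pow_left₀ (by linarith) (by linarith) 3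
    have hj1 : N ^ (3:ℕ) ≤ jap (τ + ξ ^ 3) := by
      refine le_trans ?_ ((le_abs_self _).trans (abs_le_jap _))
      nlinarith [sq_nonneg N]
    have hj2 : jap (τ + ξ ^ 3) ≤ 11 * N ^ (3:ℕ) := by
      refine (jap_le _).trans ?_
      rw [abs_of_nonneg (by nlinarith [sq_nonneg N])]
      nlinarith [sq_nonneg N, sq_nonneg (N - 1)]
    have := min_scale_rpow (t := b') hA0 (by norm_num : (0:ℝ) < 11) hj1 hj2
    rwa [eA] at this
  have hnum : N * (min 1 ((3:ℝ) ^ s) * N ^ s) * (min 1 ((11:ℝ) ^ b') * N ^ (3 * b')) ≤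
      ξ * jap ξ ^ s * jap (τ + ξ ^ 3) ^ b' := by
    refine mul3_le_mul3 (by linarith) hjs hjb' hN0.le ?_ ?_
      (Real.rpow_nonneg (jap_pos _).le _) (Real.rpow_nonneg (jap_pos _).le _)
    · exact mul_nonneg (le_min zero_le_one (Real.rpow_nonneg (by norm_num) s))
        (Real.rpow_nonneg hN0.le s)
    · exact mul_nonneg (le_min zero_le_one (Real.rpow_nonneg (by norm_num) b'))
        (Real.rpow_nonneg hN0.le _)
  -- denominator upper bound
  have hd1 : jap ξ₁ ^ k ≤ (2:ℝ) ^ k := by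
    refine Real.rpow_le_rpow (jap_pos _).le ((jap_le _).trans ?_) hk
    rw [abs_of_nonneg hξ₁1]; linarith
  have hd2 : jap (τ₁ - ξ₁ ^ 2) ^ b ≤ max 1 ((2:ℝ) ^ b) := by
    have h2 : jap (τ₁ - ξ₁ ^ 2) ≤ 2 := by
      refine (jap_le _).trans ?_
      have : |τ₁ - ξ₁ ^ 2| ≤ 1 := abs_le.mpr ⟨by nlinarith, by nlinarith⟩
      linarith
    have := rpow_le_max one_pos (one_le_jap (τ₁ - ξ₁ ^ 2)) h2 (t := b)
    rwa [Real.one_rpow] at this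
  have hd3 : jap (ξ - ξ₁) ^ k ≤ (3:ℝ) ^ k * N ^ k := by
    have h2 : jap (ξ - ξ₁) ≤ 3 * N := by
      refine (jap_le _).trans ?_
      rw [abs_of_nonneg (by linarith)]; linarith
    refine (Real.rpow_le_rpow (jap_pos _).le h2 hk).trans_eq ?_
    exact Real.mul_rpow (by norm_num) hN0.le
  have hd4 : jap ((τ - τ₁) - (ξ - ξ₁) ^ 2) ^ b ≤ max ((1/2:ℝ) ^ b) ((4:ℝ) ^ b) * N ^ b := by
    have hsub : N + 1/2 ≤ ξ - ξ₁ := by linarith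
    have hsq1 : (N + 1/2) ^ 2 ≤ (ξ - ξ₁) ^ 2 := by nlinarith
    have hsq2 : (ξ - ξ₁) ^ 2 ≤ (N + 1) ^ 2 := by nlinarith
    have h1 : (1/2 : ℝ) * N ≤ jap ((τ - τ₁) - (ξ - ξ₁) ^ 2) := by
      refine le_trans ?_ (abs_le_jap _)
      refine le_trans ?_ (neg_le_abs _)
      nlinarith
    have h2 : jap ((τ - τ₁) - (ξ - ξ₁) ^ 2) ≤ 4 * N := by
      refine (jap_le _).trans ?_
      have : |(τ - τ₁) - (ξ - ξ₁) ^ 2| ≤ 2 * N + 1 :=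
        abs_le.mpr ⟨by nlinarith, by nlinarith⟩
      linarith
    exact rpow_le_scale_max hN0 (by norm_num) (by norm_num) h1 h2
  have hden : jap ξ₁ ^ k * jap (τ₁ - ξ₁ ^ 2) ^ b * jap (ξ - ξ₁) ^ k *
      jap ((τ - τ₁) - (ξ - ξ₁) ^ 2) ^ b ≤
      (2:ℝ) ^ k * max 1 ((2:ℝ) ^ b) * ((3:ℝ) ^ k * N ^ k) *
        (max ((1/2:ℝ) ^ b) ((4:ℝ) ^ b) * N ^ b) := by
    refine mul4_le_mul4 hd1 hd2 hd3 hd4 (Real.rpow_nonneg (jap_pos _).le _)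
      (Real.rpow_nonneg (jap_pos _).le _) (Real.rpow_nonneg (jap_pos _).le _)
      (Real.rpow_nonneg (jap_pos _).le _) (le_trans zero_le_one (le_max_left _ _)) ?_ ?_
    · exact mul_nonneg (Real.rpow_nonneg (by norm_num) _) (Real.rpow_nonneg hN0.le _)
    · exact mul_nonneg (le_trans (Real.rpow_nonneg (by norm_num) b) (le_max_left _ _))
        (Real.rpow_nonneg hN0.le _)
  have hdenpos : (0:ℝ) < jap ξ₁ ^ k * jap (τ₁ - ξ₁ ^ 2) ^ b * jap (ξ - ξ₁) ^ k *
      jap ((τ - τ₁) - (ξ - ξ₁) ^ 2) ^ b :=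
    mul_pos (mul_pos (mul_pos (Real.rpow_pos_of_pos (jap_pos _) _)
      (Real.rpow_pos_of_pos (jap_pos _) _)) (Real.rpow_pos_of_pos (jap_pos _) _))
      (Real.rpow_pos_of_pos (jap_pos _) _)
  have hnum0 : (0:ℝ) ≤ N * (min 1 ((3:ℝ) ^ s) * N ^ s) * (min 1 ((11:ℝ) ^ b') * N ^ (3 * b')) := by
    refine mul_nonneg (mul_nonneg hN0.le ?_) ?_
    · exact mul_nonneg (le_min zero_le_one (Real.rpow_nonneg (by norm_num) s))
        (Real.rpow_nonneg hN0.le s)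
    · exact mul_nonneg (le_min zero_le_one (Real.rpow_nonneg (by norm_num) b'))
        (Real.rpow_nonneg hN0.le _)
  have hdiv : N * (min 1 ((3:ℝ) ^ s) * N ^ s) * (min 1 ((11:ℝ) ^ b') * N ^ (3 * b')) /
      ((2:ℝ) ^ k * max 1 ((2:ℝ) ^ b) * ((3:ℝ) ^ k * N ^ k) *
        (max ((1/2:ℝ) ^ b) ((4:ℝ) ^ b) * N ^ b)) ≤
      ξ * jap ξ ^ s * jap (τ + ξ ^ 3) ^ b' /
      (jap ξ₁ ^ k * jap (τ₁ - ξ₁ ^ 2) ^ b * jap (ξ - ξ₁) ^ k *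
        jap ((τ - τ₁) - (ξ - ξ₁) ^ 2) ^ b) :=
    div_le_div₀ (hnum0.trans hnum) hnum hdenpos hden
  refine le_trans (le_of_eq ?_) hdiv
  have hNpow : N * N ^ s * N ^ (3 * b') / (N ^ k * N ^ b) = N ^ (1 + s - k + 3 * b' - b) := by
    rw [show 1 + s - k + 3 * b' - b = 1 + s + 3 * b' - (k + b) by ring,
      Real.rpow_sub hN0, Real.rpow_add hN0, Real.rpow_add hN0, Real.rpow_add hN0,
      Real.rpow_one]
  rw [← hNpow, Cst, div_mul_div_comm]
  rw [div_eq_div_iff (by positivity) ?_]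
  · ring
  · have h3 : (0:ℝ) < (3:ℝ) ^ k := Real.rpow_pos_of_pos (by norm_num) k
    have h2 : (0:ℝ) < (2:ℝ) ^ k := Real.rpow_pos_of_pos (by norm_num) k
    have h4 : (0:ℝ) < max 1 ((2:ℝ) ^ b) := lt_of_lt_of_le one_pos (le_max_left _ _)
    have h6 : (0:ℝ) < max ((1/2:ℝ) ^ b) ((4:ℝ) ^ b) :=
      lt_of_lt_of_le (Real.rpow_pos_of_pos (by norm_num) b) (le_max_left _ _)
    have h7 : (0:ℝ) < N ^ k := Real.rpow_pos_of_pos hN0 k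
    have h8 : (0:ℝ) < N ^ b := Real.rpow_pos_of_pos hN0 b
    positivity

lemma measurableSet_Rx (N : ℝ) : MeasurableSet (Rx N) :=
  measurableSet_Icc.prod (measurableSet_Icc.prod (measurableSet_Icc.prod measurableSet_Icc))

lemma isCompact_Rx (N : ℝ) : IsCompact (Rx N) :=
  isCompact_Icc.prod (isCompact_Icc.prod (isCompact_Icc.prod isCompact_Icc))

lemma volume_Rx (N : ℝ) : (volume (Rx N)).toReal = 1 / 256 := by
  have e1 : N ^ 2 + 1/2 - (N ^ 2 + 1/4) = (1/4:ℝ) := by ring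
  have e2 : N + 1 - (N + 3/4) = (1/4:ℝ) := by ring
  rw [Rx, Measure.volume_eq_prod, Measure.prod_prod, Measure.volume_eq_prod,
    Measure.prod_prod, Measure.volume_eq_prod, Measure.prod_prod]
  simp only [Real.volume_Icc]
  rw [e1, e2]
  norm_num [ENNReal.toReal_mul, ENNReal.toReal_ofReal]

end BilinearCounterexample

open BilinearCounterexample

/-- Corollary 4.6: with the localized test functions (each of `L²` norm one),
the dualized trilinear form is bounded below by `c·N^{1+s-k+3b'-b}`, which is
unbounded as `N → ∞` when `1 + s - k + 3b' - b > 0` (failure of the estimate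
`‖∂ₓ(u₁ū₂)‖_{Y^{s,b'}} ≲ ‖u₁‖_{X^{k,b}}‖u₂‖_{X^{k,b}}` for `k - s < -1`). -/
theorem bilinear_estimate_fails_sk_gt_one (s k b b' : ℝ)
    (hs : -3 / 4 < s) (hk : 0 ≤ k) (hsk : 1 < s - k) :
    ∃ c : ℝ, 0 < c ∧ ∃ N₀ : ℝ, 1 ≤ N₀ ∧
      (∀ N : ℝ, N₀ ≤ N →
        (∫ q : ℝ × ℝ,
            (ind N (N + 1) q.2 * ind (N ^ 2) (N ^ 2 + 1) q.1) ^ 2 = 1) ∧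
        c * N ^ (1 + s - k + 3 * b' - b) ≤
          ∫ q : ℝ × ℝ × ℝ × ℝ,
            (q.2.1 * jap q.2.1 ^ s * jap (q.1 + q.2.1 ^ 3) ^ b' *
              (ind N (N + 1) q.2.1 * ind (N ^ 2) (N ^ 2 + 1) q.1) *
              (ind 0 1 q.2.2.2 * ind 0 1 q.2.2.1) *
              (ind N (N + 1) (q.2.1 - q.2.2.2) *
                ind (N ^ 2) (N ^ 2 + 1) (q.1 - q.2.2.1))) /
            (jap q.2.2.2 ^ k * jap (q.2.2.1 - q.2.2.2 ^ 2) ^ b *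
              jap (q.2.1 - q.2.2.2) ^ k *
              jap ((q.1 - q.2.2.1) - (q.2.1 - q.2.2.2) ^ 2) ^ b)) ∧
      (0 < 1 + s - k + 3 * b' - b →
        Filter.Tendsto (fun N : ℝ => c * N ^ (1 + s - k + 3 * b' - b))
          Filter.atTop Filter.atTop) := by
  have hc : 0 < Cst s k b b' / 256 := by
    have := Cst_pos s k b b'; linarith
  refine ⟨Cst s k b b' / 256, hc, 1, le_refl 1, fun N hN => ⟨?_, ?_⟩,
    fun hα => Filter.Tendsto.const_mul_atTop hc (tendsto_rpow_atTop hα)⟩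
  · -- L² norm one
    have hind : ∀ q : ℝ × ℝ, (ind N (N + 1) q.2 * ind (N ^ 2) (N ^ 2 + 1) q.1) ^ 2
        = Set.indicator (Set.Icc (N ^ 2) (N ^ 2 + 1) ×ˢ Set.Icc N (N + 1)) 1 q := by
      rintro ⟨x, y⟩
      by_cases h1 : x ∈ Set.Icc (N ^ 2) (N ^ 2 + 1)
      · by_cases h2 : y ∈ Set.Icc N (N + 1)
        · rw [Set.indicator_of_mem (Set.mem_prod.mpr ⟨h1, h2⟩), ind_of_mem h1, ind_of_mem h2]
          norm_num
        · rw [Set.indicator_of_notMem (fun hm => h2 hm.2), ind_eq_zero h2]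
          ring
      · rw [Set.indicator_of_notMem (fun hm => h1 hm.1), ind_eq_zero h1]
        ring
    rw [integral_congr_ae (Filter.Eventually.of_forall hind),
      integral_indicator_one (measurableSet_Icc.prod measurableSet_Icc), measureReal_def,
      Measure.volume_eq_prod, Measure.prod_prod, Real.volume_Icc, Real.volume_Icc]
    norm_num
  · -- main lower bound
    have hN0 : (0:ℝ) < N := lt_of_lt_of_le one_pos hN
    have hFint : Integrable (F s k b b' N) := integrable_F s k b b' hk hN
    have h1 : Cst s k b b' * N ^ (1 + s - k + 3 * b' - b) * (volume (Rx N)).toReal ≤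
        ∫ q in Rx N, F s k b b' N q :=
      setIntegral_ge_of_const_le_real (measurableSet_Rx N) (isCompact_Rx N).measure_lt_top.ne
        (fun q hq => F_lower hk hN hq) hFint.integrableOn
    have h2 : (∫ q in Rx N, F s k b b' N q) ≤ ∫ q, F s k b b' N q :=
      setIntegral_le_integral hFint
        (Filter.Eventually.of_forall (F_nonneg s k b b' hN0.le))
    calc Cst s k b b' / 256 * N ^ (1 + s - k + 3 * b' - b)
        = Cst s k b b' * N ^ (1 + s - k + 3 * b' - b) * (1 / 256) := by ring
      _ = Cst s k b b' * N ^ (1 + s - k + 3 * b' - b) * (volume (Rx N)).toReal := by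
          rw [volume_Rx]
      _ ≤ ∫ q in Rx N, F s k b b' N q := h1
      _ ≤ ∫ q, F s k b b' N q := h2
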